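/- arXiv:2007.04917 — 4 statements merged into one kernel-verified Lean document; each statement's English description precedes it below -/
import Mathlib

section
/- Let σ be a permutation of {1,...,n} and 1 ≤ i ≤ n. Define τ on {1,...,n+1} by inserting the value i after position i: τ(k) = ξ_i(σ(k)) for k ≤ i, τ(i+1) = i, and τ(k) = ξ_i(σ(k-1)) for k > i+1, where ξ_m(s) = s if s < m and s+1 otherwise. Then τ is a permutation of {1,...,n+1}, and if σ is an n-cycle then τ is an (n+1)-cycle. -/
/-- The shift function ξ_m on ℕ. -/
def xi (m k : ℕ) : ℕ := if k < m then k else k + 1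

theorem neg_ins_aux (n i : ℕ) (hi1 : 1 ≤ i) (hin : i ≤ n) (σ τ : ℕ → ℕ)
    (hτ : ∀ k, τ k = if k ≤ i then xi i (σ k) else if k = i + 1 then i else xi i (σ (k - 1)))
    (hσ : Set.BijOn σ (Set.Icc 1 n) (Set.Icc 1 n)) :
    Set.BijOn τ (Set.Icc 1 (n + 1)) (Set.Icc 1 (n + 1)) ∧
      ((∀ a ∈ Set.Icc 1 n, ∀ b ∈ Set.Icc 1 n, ∃ m : ℕ, σ^[m] a = b) →
        ∀ a ∈ Set.Icc 1 (n + 1), ∀ b ∈ Set.Icc 1 (n + 1), ∃ m : ℕ, τ^[m] a = b) := by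
  obtain ⟨hmaps, hinj, hsurj⟩ := hσ
  have xiI : ∀ a b : ℕ, xi i a = xi i b → a = b := by
    intro a b h; unfold xi at h; split_ifs at h <;> omega
  have xiNe : ∀ k, xi i k ≠ i := by
    intro k; unfold xi; split_ifs <;> omega
  have xiMem : ∀ k, k ∈ Set.Icc 1 n → xi i k ∈ Set.Icc 1 (n + 1) := by
    intro k hk
    simp only [Set.mem_Icc] at hk ⊢
    unfold xi; split_ifs <;> omega
  have hrep : ∀ c, 1 ≤ c → c ≤ n + 1 → c ≠ i → ∃ c', c' ∈ Set.Icc 1 n ∧ xi i c' = c := by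
    intro c h1 h2 h3
    by_cases h : c < i
    · exact ⟨c, by simp only [Set.mem_Icc]; omega, by simp [xi, h]⟩
    · exact ⟨c - 1, by simp only [Set.mem_Icc]; omega, by unfold xi; split_ifs <;> omega⟩
  have hstep : ∀ a, a ∈ Set.Icc 1 n → ∃ e, τ^[e] (xi i a) = xi i (σ a) := by
    intro a ha
    simp only [Set.mem_Icc] at ha
    rcases lt_trichotomy a i with h | h | h
    · have h1 : xi i a = a := by simp [xi, h]
      refine ⟨1, ?_⟩
      rw [Function.iterate_one, h1, hτ, if_pos (by omega)]
    · subst h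
      have h1 : xi a a = a + 1 := by simp [xi]
      refine ⟨2, ?_⟩
      have e1 : τ (a + 1) = a := by rw [hτ, if_neg (by omega), if_pos rfl]
      have e2 : τ a = xi a (σ a) := by rw [hτ, if_pos le_rfl]
      show τ (τ (xi a a)) = _
      rw [h1, e1, e2]
    · have h1 : xi i a = a + 1 := by unfold xi; split_ifs <;> omega
      refine ⟨1, ?_⟩
      rw [Function.iterate_one, h1, hτ, if_neg (by omega), if_neg (by omega)]
      simp
  have hreach : ∀ m a, a ∈ Set.Icc 1 n → ∃ M, τ^[M] (xi i a) = xi i (σ^[m] a) := by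
    intro m
    induction m with
    | zero => intro a ha; exact ⟨0, rfl⟩
    | succ m ih =>
      intro a ha
      obtain ⟨M, hM⟩ := ih a ha
      obtain ⟨e, he⟩ := hstep (σ^[m] a) (hmaps.iterate m ha)
      refine ⟨e + M, ?_⟩
      rw [Function.iterate_add_apply, hM, he, Function.iterate_succ_apply']
  constructor
  · refine ⟨?_, ?_, ?_⟩
    · intro k hk
      simp only [Set.mem_Icc] at hk
      rw [hτ]
      split_ifs with h1 h2
      · exact xiMem _ (hmaps (Set.mem_Icc.mpr (by omega)))
      · simp only [Set.mem_Icc]; omega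
      · exact xiMem _ (hmaps (Set.mem_Icc.mpr (by omega)))
    · intro a ha b hb hab
      simp only [Set.mem_Icc] at ha hb
      rw [hτ, hτ] at hab
      split_ifs at hab with h1 h2 h3 h4 h5
      · have := hinj (Set.mem_Icc.mpr (by omega)) (Set.mem_Icc.mpr (by omega)) (xiI _ _ hab)
        omega
      · exact absurd hab (xiNe _)
      · have := hinj (Set.mem_Icc.mpr (by omega)) (Set.mem_Icc.mpr (by omega)) (xiI _ _ hab)
        omega
      · exact absurd hab.symm (xiNe _)
      · omega
      · exact absurd hab.symm (xiNe _)
      · have := hinj (Set.mem_Icc.mpr (by omega)) (Set.mem_Icc.mpr (by omega)) (xiI _ _ hab)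
        omega
      · exact absurd hab (xiNe _)
      · have := hinj (Set.mem_Icc.mpr (by omega)) (Set.mem_Icc.mpr (by omega)) (xiI _ _ hab)
        omega
    · intro b hb
      simp only [Set.mem_Icc] at hb
      by_cases hbi : b = i
      · refine ⟨i + 1, Set.mem_Icc.mpr (by omega), ?_⟩
        rw [hτ, if_neg (by omega), if_pos rfl, hbi]
      · obtain ⟨b', hb'mem, hb'⟩ := hrep b hb.1 hb.2 hbi
        obtain ⟨a', ha'mem, ha'⟩ := hsurj hb'mem
        simp only [Set.mem_Icc] at ha'mem
        by_cases h : a' ≤ i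
        · refine ⟨a', Set.mem_Icc.mpr (by omega), ?_⟩
          rw [hτ, if_pos h, ha', hb']
        · refine ⟨a' + 1, Set.mem_Icc.mpr (by omega), ?_⟩
          rw [hτ, if_neg (by omega), if_neg (by omega)]
          simpa [ha'] using hb'
  · intro hcyc a ha b hb
    simp only [Set.mem_Icc] at ha hb
    have hiMem : i ∈ Set.Icc 1 n := Set.mem_Icc.mpr ⟨hi1, hin⟩
    have hA : ∀ c, c ∈ Set.Icc 1 n → ∃ M, τ^[M] a = xi i c := by
      intro c hc
      by_cases hai : a = i
      · subst hai
        obtain ⟨m, hm⟩ := hcyc (σ a) (hmaps hiMem) c hc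
        obtain ⟨M, hM⟩ := hreach m (σ a) (hmaps hiMem)
        refine ⟨M + 1, ?_⟩
        rw [Function.iterate_succ_apply]
        have e2 : τ a = xi a (σ a) := by rw [hτ, if_pos le_rfl]
        rw [e2, hM, hm]
      · obtain ⟨a', ha'mem, ha'⟩ := hrep a ha.1 ha.2 hai
        obtain ⟨m, hm⟩ := hcyc a' ha'mem c hc
        obtain ⟨M, hM⟩ := hreach m a' ha'mem
        exact ⟨M, by rw [← ha', hM, hm]⟩
    by_cases hbi : b = i
    · obtain ⟨M, hM⟩ := hA i hiMem
      refine ⟨M + 1, ?_⟩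
      rw [Function.iterate_succ_apply', hM]
      have h1 : xi i i = i + 1 := by simp [xi]
      rw [h1, hτ, if_neg (by omega), if_pos rfl, hbi]
    · obtain ⟨b', hb'mem, hb'⟩ := hrep b hb.1 hb.2 hbi
      obtain ⟨M, hM⟩ := hA b' hb'mem
      exact ⟨M, by rw [hM, hb']⟩

theorem negative_insertion_perm (n i : ℕ) (hi1 : 1 ≤ i) (hin : i ≤ n) (σ : ℕ → ℕ)
    (hσ : Set.BijOn σ (Set.Icc 1 n) (Set.Icc 1 n)) :
    let τ : ℕ → ℕ := fun k =>
      if k ≤ i then xi i (σ k) else if k = i + 1 then i else xi i (σ (k - 1))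
    Set.BijOn τ (Set.Icc 1 (n + 1)) (Set.Icc 1 (n + 1)) ∧
      ((∀ a ∈ Set.Icc 1 n, ∀ b ∈ Set.Icc 1 n, ∃ m : ℕ, σ^[m] a = b) →
        ∀ a ∈ Set.Icc 1 (n + 1), ∀ b ∈ Set.Icc 1 (n + 1), ∃ m : ℕ, τ^[m] a = b) := by
  intro τ
  exact neg_ins_aux n i hi1 hin σ τ (fun k => rfl) hσ
end

section
/- Define an insertion on permutations: for a derangement σ of {1,...,n} and position i, the positive insertion produces τ with τ(i) = i+1 and τ(ξ_{i}(k)) = ξ_{i+1}(σ(k)) for all k (suitably reindexed). If σ is a derangement, then so is the result of any positive or negative insertion. -/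
theorem insertion_of_derangement (n i : ℕ) (hi1 : 1 ≤ i) (hin : i ≤ n) (σ : ℕ → ℕ)
    (hσ : Set.BijOn σ (Set.Icc 1 n) (Set.Icc 1 n))
    (hder : ∀ k ∈ Set.Icc 1 n, σ k ≠ k) :
    let τpos : ℕ → ℕ := fun k =>
      if k < i then xi (i + 1) (σ k) else if k = i then i + 1 else xi (i + 1) (σ (k - 1))
    let τneg : ℕ → ℕ := fun k =>
      if k ≤ i then xi i (σ k) else if k = i + 1 then i else xi i (σ (k - 1))
    (∀ k ∈ Set.Icc 1 (n + 1), τpos k ≠ k) ∧ (∀ k ∈ Set.Icc 1 (n + 1), τneg k ≠ k) := by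
  intro τpos τneg
  constructor
  · intro k hk
    simp only [Set.mem_Icc] at hk
    simp only [τpos, xi]
    rcases lt_trichotomy k i with h | h | h
    · have hs := hder k (by simp only [Set.mem_Icc]; omega)
      simp only [if_pos h]
      split_ifs <;> omega
    · subst h
      simp
    · have hs := hder (k - 1) (by simp only [Set.mem_Icc]; omega)
      simp only [if_neg (by omega : ¬ k < i), if_neg (by omega : ¬ k = i)]
      split_ifs <;> omega
  · intro k hk
    simp only [Set.mem_Icc] at hk
    simp only [τneg, xi]
    by_cases h : k ≤ i
    · have hs := hder k (by simp only [Set.mem_Icc]; omega)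
      simp only [if_pos h]
      split_ifs <;> omega
    · by_cases h2 : k = i + 1
      · simp only [if_neg h, if_pos h2]; omega
      · have hs := hder (k - 1) (by simp only [Set.mem_Icc]; omega)
        simp only [if_neg h, if_neg h2]
        split_ifs <;> omega
end

section
/- The Diaconis–Graham inequality: for any permutation σ of {1,...,n}, inv(σ) + (n − cyc(σ)) ≤ td(σ), where inv(σ) is the number of inversions, cyc(σ) is the number of cycles (including fixed points), and td(σ) = ∑_{i=1}^n |σ(i) − i| is the total displacement. -/
open Finset Equiv Equiv.Perm

namespace DG

variable {n : ℕ}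

def invC (π : Equiv.Perm (Fin n)) : ℕ :=
  (Finset.univ.filter fun p : Fin n × Fin n => p.1 < p.2 ∧ π p.2 < π p.1).card

def DD (π : Equiv.Perm (Fin n)) : ℕ := ∑ i : Fin n, ((π i : ℤ) - (i : ℤ)).natAbs

def cyc (π : Equiv.Perm (Fin n)) : ℕ :=
  Multiset.card π.cycleType + (Finset.univ.filter fun i : Fin n => π i = i).card

def orbFun (π : Equiv.Perm (Fin n)) (x : Fin n) : Finset (Fin n) :=
  Finset.univ.filter fun y => π.SameCycle x y

def orbCount (π : Equiv.Perm (Fin n)) : ℕ := (Finset.univ.image (orbFun π)).card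

lemma mem_orbFun {π : Equiv.Perm (Fin n)} {x y : Fin n} :
    y ∈ orbFun π x ↔ π.SameCycle x y := by simp [orbFun]

lemma orbFun_eq_of_sameCycle {π : Equiv.Perm (Fin n)} {x z : Fin n}
    (h : π.SameCycle x z) : orbFun π z = orbFun π x := by
  ext w
  simp only [mem_orbFun]
  exact ⟨fun hw => h.trans hw, fun hw => h.symm.trans hw⟩

lemma orbFun_fixed {π : Equiv.Perm (Fin n)} {x : Fin n} (h : π x = x) :
    orbFun π x = {x} := by
  ext y
  simp only [mem_orbFun, Finset.mem_singleton]
  exact ⟨fun h' => (h'.eq_of_left h).symm, fun h' => h' ▸ Equiv.Perm.SameCycle.refl _ _⟩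

lemma orbFun_support {π : Equiv.Perm (Fin n)} {x : Fin n} (hx : x ∈ π.support) :
    orbFun π x = (π.cycleOf x).support := by
  ext y
  rw [mem_orbFun, Equiv.Perm.mem_support_cycleOf_iff]
  exact ⟨fun h => ⟨h, hx⟩, And.left⟩

lemma card_cycleType_eq (π : Equiv.Perm (Fin n)) :
    Multiset.card π.cycleType = π.cycleFactorsFinset.card := by
  rw [Equiv.Perm.cycleType_def, Multiset.card_map]
  rfl

lemma cyc_eq_orbCount (π : Equiv.Perm (Fin n)) : cyc π = orbCount π := by
  classical
  have hfix : (Finset.univ.filter fun x : Fin n => π x = x) = π.supportᶜ := by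
    ext x
    simp [Equiv.Perm.mem_support]
  have himg : Finset.univ.image (orbFun π)
      = (π.support.image (orbFun π)) ∪ (π.supportᶜ.image (orbFun π)) := by
    rw [← Finset.image_union, Finset.union_compl]
  have h2 : π.supportᶜ.image (orbFun π)
      = π.supportᶜ.image (fun x => ({x} : Finset (Fin n))) := by
    apply Finset.image_congr
    intro x hx
    simp only [Finset.coe_compl, Set.mem_compl_iff, Finset.mem_coe,
      Equiv.Perm.mem_support, not_not] at hx
    exact orbFun_fixed hx
  have h3 : π.support.image (orbFun π) = π.cycleFactorsFinset.image Equiv.Perm.support := by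
    ext s
    simp only [Finset.mem_image]
    constructor
    · rintro ⟨x, hx, rfl⟩
      exact ⟨π.cycleOf x, Equiv.Perm.cycleOf_mem_cycleFactorsFinset_iff.2 hx,
        (orbFun_support hx).symm⟩
    · rintro ⟨c, hc, rfl⟩
      have hcyc := (Equiv.Perm.mem_cycleFactorsFinset_iff.1 hc).1
      have hne : c.support.Nonempty := by
        rw [Finset.nonempty_iff_ne_empty, Ne, Equiv.Perm.support_eq_empty_iff]
        exact hcyc.ne_one
      obtain ⟨x, hx⟩ := hne
      have hx2 : x ∈ π.support := by
        rw [Equiv.Perm.mem_support, ← (Equiv.Perm.mem_cycleFactorsFinset_iff.1 hc).2 x hx]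
        exact Equiv.Perm.mem_support.1 hx
      refine ⟨x, hx2, ?_⟩
      rw [orbFun_support hx2, ← Equiv.Perm.cycle_is_cycleOf hx hc]
  have hsupp_ne : ∀ c ∈ π.cycleFactorsFinset, c.support.Nonempty := by
    intro c hc
    rw [Finset.nonempty_iff_ne_empty, Ne, Equiv.Perm.support_eq_empty_iff]
    exact (Equiv.Perm.mem_cycleFactorsFinset_iff.1 hc).1.ne_one
  have h4 : (π.cycleFactorsFinset.image Equiv.Perm.support).card
      = π.cycleFactorsFinset.card := by
    apply Finset.card_image_of_injOn
    intro c hc d hd hcd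
    by_contra hne
    have hdisj := (Equiv.Perm.cycleFactorsFinset_pairwise_disjoint π) hc hd hne
    rw [Equiv.Perm.disjoint_iff_disjoint_support, hcd, disjoint_self] at hdisj
    obtain ⟨x, hx⟩ := hsupp_ne d hd
    rw [hdisj] at hx
    exact absurd hx (Finset.notMem_empty x)
  have h5 : (π.supportᶜ.image fun x => ({x} : Finset (Fin n))).card = π.supportᶜ.card :=
    Finset.card_image_of_injective _ Finset.singleton_injective
  have hdisj2 : Disjoint (π.support.image (orbFun π)) (π.supportᶜ.image (orbFun π)) := by
    rw [h2, h3, Finset.disjoint_left]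
    rintro s hs1 hs2
    simp only [Finset.mem_image] at hs1 hs2
    obtain ⟨c, hc, rfl⟩ := hs1
    obtain ⟨x, hx, hxs⟩ := hs2
    simp only [Finset.mem_compl, Equiv.Perm.mem_support, not_not] at hx
    obtain ⟨y, hy⟩ := hsupp_ne c hc
    have hy2 : y ∈ π.support := by
      rw [Equiv.Perm.mem_support, ← (Equiv.Perm.mem_cycleFactorsFinset_iff.1 hc).2 y hy]
      exact Equiv.Perm.mem_support.1 hy
    rw [← hxs, Finset.mem_singleton] at hy
    subst hy
    exact (Equiv.Perm.mem_support.1 hy2) hx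
  rw [cyc, orbCount, himg, Finset.card_union_of_disjoint hdisj2, h2, h3, h4, h5,
    card_cycleType_eq, hfix]

lemma orbCount_le (π : Equiv.Perm (Fin n)) (x y : Fin n) :
    orbCount π ≤ orbCount (π * Equiv.swap x y) + 1 := by
  classical
  set π' := π * Equiv.swap x y with hπ'
  set A := orbFun π x with hA
  set B := orbFun π y with hB
  set R : Finset (Fin n) := Finset.univ \ (A ∪ B) with hR
  have hmemR : ∀ z, z ∈ R ↔ (¬ π.SameCycle x z ∧ ¬ π.SameCycle y z) := by
    intro z
    rw [hR, Finset.mem_sdiff, Finset.mem_union]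
    simp [hA, hB, mem_orbFun]
  have key : ∀ z, z ∈ R → ∀ m : ℕ, (π' ^ m) z = (π ^ m) z := by
    intro z hz m
    induction m with
    | zero => rfl
    | succ m ih =>
      have hw : π.SameCycle z ((π ^ m) z) := ⟨(m : ℤ), by rw [zpow_natCast]⟩
      have hzx := ((hmemR z).1 hz).1
      have hzy := ((hmemR z).1 hz).2
      have hx' : (π ^ m) z ≠ x := by
        intro hxx
        exact hzx (hxx ▸ hw).symm
      have hy' : (π ^ m) z ≠ y := by
        intro hyy
        exact hzy (hyy ▸ hw).symm
      rw [pow_succ', Equiv.Perm.mul_apply, ih, pow_succ', Equiv.Perm.mul_apply,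
        Equiv.swap_apply_of_ne_of_ne hx' hy', Equiv.Perm.mul_apply]
  have horb : ∀ z ∈ R, orbFun π' z = orbFun π z := by
    intro z hz
    ext w
    simp only [mem_orbFun]
    constructor
    · intro hsc
      obtain ⟨m, _, hm⟩ := hsc.exists_pow_eq'
      exact ⟨(m : ℤ), by rw [zpow_natCast, ← key z hz m]; exact hm⟩
    · intro hsc
      obtain ⟨m, _, hm⟩ := hsc.exists_pow_eq'
      exact ⟨(m : ℤ), by rw [zpow_natCast, key z hz m]; exact hm⟩
  have hxnot : ∀ z ∈ R, x ∉ orbFun π z := by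
    intro z hz hxz
    exact ((hmemR z).1 hz).1 (mem_orbFun.1 hxz).symm
  have h1 : Finset.univ.image (orbFun π) ⊆ insert A (insert B (R.image (orbFun π))) := by
    intro s hs
    obtain ⟨z, _, rfl⟩ := Finset.mem_image.1 hs
    by_cases hz : z ∈ R
    · exact Finset.mem_insert.2 (Or.inr (Finset.mem_insert.2
        (Or.inr (Finset.mem_image_of_mem _ hz))))
    · have hzAB : z ∈ A ∪ B := by
        rw [hR, Finset.mem_sdiff] at hz
        push_neg at hz
        exact hz (Finset.mem_univ z)
      rcases Finset.mem_union.1 hzAB with hzA | hzB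
      · exact Finset.mem_insert.2 (Or.inl (orbFun_eq_of_sameCycle (mem_orbFun.1 hzA)))
      · exact Finset.mem_insert.2 (Or.inr (Finset.mem_insert.2
          (Or.inl (orbFun_eq_of_sameCycle (mem_orbFun.1 hzB)))))
  have h2 : insert (orbFun π' x) (R.image (orbFun π')) ⊆ Finset.univ.image (orbFun π') := by
    intro s hs
    rcases Finset.mem_insert.1 hs with rfl | hs2
    · exact Finset.mem_image_of_mem _ (Finset.mem_univ x)
    · obtain ⟨z, _, rfl⟩ := Finset.mem_image.1 hs2
      exact Finset.mem_image_of_mem _ (Finset.mem_univ z)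
  have himg : R.image (orbFun π') = R.image (orbFun π) :=
    Finset.image_congr (fun z hz => horb z hz)
  have hnotmem : orbFun π' x ∉ R.image (orbFun π') := by
    rw [himg]
    intro hmem
    obtain ⟨z, hz, hzs⟩ := Finset.mem_image.1 hmem
    have hxin : x ∈ orbFun π z := by
      rw [hzs]
      exact mem_orbFun.2 (Equiv.Perm.SameCycle.refl _ _)
    exact hxnot z hz hxin
  have hcard2 : (R.image (orbFun π)).card + 1 ≤ orbCount π' := by
    have hc := Finset.card_le_card h2
    rw [Finset.card_insert_of_notMem hnotmem, himg] at hc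
    exact hc
  have hcard1 : orbCount π ≤ (R.image (orbFun π)).card + 2 := by
    have hc := Finset.card_le_card h1
    have hc2 := Finset.card_insert_le A (insert B (R.image (orbFun π)))
    have hc3 := Finset.card_insert_le B (R.image (orbFun π))
    rw [orbCount]
    omega
  omega

lemma cyc_swap_le (π : Equiv.Perm (Fin n)) (x y : Fin n) :
    cyc (π * Equiv.swap x y) ≤ cyc π + 1 := by
  rw [cyc_eq_orbCount, cyc_eq_orbCount]
  have h := orbCount_le (π * Equiv.swap x y) x y
  rwa [mul_assoc, Equiv.swap_mul_self, mul_one] at h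

lemma cyc_one : cyc (1 : Equiv.Perm (Fin n)) = n := by
  rw [cyc, Equiv.Perm.cycleType_one]
  simp

lemma invC_one : invC (1 : Equiv.Perm (Fin n)) = 0 := by
  rw [invC, Finset.card_eq_zero, Finset.filter_eq_empty_iff]
  rintro p -
  simp only [Equiv.Perm.one_apply]
  rintro ⟨h1, h2⟩
  exact absurd h1 (not_lt.2 h2.le)

lemma exists_cross {σ : Equiv.Perm (Fin n)} (h : σ ≠ 1) :
    ∃ i j k : Fin n, (i : ℕ) ≤ k ∧ (k : ℕ) < j ∧ (k : ℕ) < (σ i : Fin n) ∧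
      ((σ j : Fin n) : ℕ) ≤ k ∧
      (∀ p : Fin n, (i : ℕ) < p → (p : ℕ) ≤ k → ((σ p : Fin n) : ℕ) ≤ k) ∧
      (∀ p : Fin n, (k : ℕ) < p → (p : ℕ) < j → (k : ℕ) < ((σ p : Fin n) : ℕ)) := by
  classical
  have hex : ∃ p : Fin n, (p : ℕ) < σ p := by
    by_contra hc
    push_neg at hc
    apply h
    have hsum : ∑ p : Fin n, ((p : ℤ) - ((σ p : Fin n) : ℤ)) = 0 := by
      rw [Finset.sum_sub_distrib, Equiv.sum_comp σ (fun p : Fin n => (p : ℤ)), sub_self]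
    have hz := (Finset.sum_eq_zero_iff_of_nonneg ?_).1 hsum
    · ext p
      have := hz p (Finset.mem_univ p)
      have hv : ((σ p : Fin n) : ℕ) = (p : ℕ) := by omega
      simp only [Equiv.Perm.coe_one, id_eq]
      exact hv
    · intro p _
      have := hc p
      simp only [sub_nonneg]
      exact_mod_cast this
  obtain ⟨k, hk⟩ := hex
  set T := Finset.univ.filter (fun p : Fin n => (p : ℕ) ≤ k ∧ (k : ℕ) < σ p) with hTdef
  have hT : T.Nonempty := ⟨k, Finset.mem_filter.2 ⟨Finset.mem_univ _, le_refl _, hk⟩⟩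
  set i := T.max' hT with hidef
  have hiT : (i : ℕ) ≤ k ∧ (k : ℕ) < σ i := (Finset.mem_filter.1 (T.max'_mem hT)).2
  set U := Finset.univ.filter (fun p : Fin n => (k : ℕ) < p ∧ ((σ p : Fin n) : ℕ) ≤ k) with hUdef
  have hU : U.Nonempty := by
    by_contra hc
    have hall : ∀ p : Fin n, (k : ℕ) < p → (k : ℕ) < σ p := by
      intro p hp
      by_contra hle
      push_neg at hle
      exact hc ⟨p, Finset.mem_filter.2 ⟨Finset.mem_univ _, hp, hle⟩⟩
    set V := Finset.univ.filter (fun q : Fin n => (k : ℕ) < q) with hVdef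
    set P := Finset.univ.filter (fun p : Fin n => (k : ℕ) < σ p) with hPdef
    have hcard : P.card = V.card := by
      apply Finset.card_bij (fun p _ => σ p)
      · intro p hp
        exact Finset.mem_filter.2 ⟨Finset.mem_univ _, (Finset.mem_filter.1 hp).2⟩
      · intro p _ q _ hpq
        exact σ.injective hpq
      · intro q hq
        refine ⟨σ.symm q, ?_, by simp⟩
        refine Finset.mem_filter.2 ⟨Finset.mem_univ _, ?_⟩
        simpa using (Finset.mem_filter.1 hq).2
    have hsub : insert k V ⊆ P := by
      intro q hq
      rcases Finset.mem_insert.1 hq with rfl | hq2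
      · exact Finset.mem_filter.2 ⟨Finset.mem_univ _, hk⟩
      · exact Finset.mem_filter.2 ⟨Finset.mem_univ _, hall q (Finset.mem_filter.1 hq2).2⟩
    have hknot : k ∉ V := by
      intro hkV
      exact absurd (Finset.mem_filter.1 hkV).2 (lt_irrefl _)
    have hle := Finset.card_le_card hsub
    rw [Finset.card_insert_of_notMem hknot, hcard] at hle
    omega
  set j := U.min' hU with hjdef
  have hjU : (k : ℕ) < j ∧ ((σ j : Fin n) : ℕ) ≤ k := (Finset.mem_filter.1 (U.min'_mem hU)).2
  refine ⟨i, j, k, hiT.1, hjU.1, hiT.2, hjU.2, ?_, ?_⟩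
  · intro p hip hpk
    by_contra hle
    push_neg at hle
    have hpT : p ∈ T := Finset.mem_filter.2 ⟨Finset.mem_univ _, hpk, hle⟩
    have hmax := T.le_max' p hpT
    have : (p : ℕ) ≤ i := hmax
    omega
  · intro p hkp hpj
    by_contra hle
    push_neg at hle
    have hpU : p ∈ U := Finset.mem_filter.2 ⟨Finset.mem_univ _, hkp, hle⟩
    have hmin := U.min'_le p hpU
    have : (j : ℕ) ≤ p := hmin
    omega

lemma DD_swap (σ : Equiv.Perm (Fin n)) {i j : Fin n} (hij : i ≠ j) :
    (DD (σ * Equiv.swap i j) : ℤ) + ((σ i : ℤ) - (i : ℤ)).natAbs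
        + ((σ j : ℤ) - (j : ℤ)).natAbs
      = (DD σ : ℤ) + ((σ j : ℤ) - (i : ℤ)).natAbs + ((σ i : ℤ) - (j : ℤ)).natAbs := by
  set σ' := σ * Equiv.swap i j with hσ'
  have key : ∀ p : Fin n, p ≠ i → p ≠ j → σ' p = σ p := by
    intro p h1 h2
    simp [hσ', Equiv.Perm.mul_apply, Equiv.swap_apply_of_ne_of_ne h1 h2]
  have h1 : σ' i = σ j := by simp [hσ', Equiv.Perm.mul_apply]
  have h2 : σ' j = σ i := by simp [hσ', Equiv.Perm.mul_apply]
  have hsum : ∑ p : Fin n, ((((σ' p : ℤ) - (p : ℤ)).natAbs : ℤ) - (((σ p : ℤ) - (p : ℤ)).natAbs : ℤ))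
      = ∑ p ∈ ({i, j} : Finset (Fin n)),
          ((((σ' p : ℤ) - (p : ℤ)).natAbs : ℤ) - (((σ p : ℤ) - (p : ℤ)).natAbs : ℤ)) := by
    refine (Finset.sum_subset (Finset.subset_univ _) ?_).symm
    intro p _ hp
    simp only [Finset.mem_insert, Finset.mem_singleton, not_or] at hp
    rw [key p hp.1 hp.2, sub_self]
  rw [Finset.sum_pair hij, Finset.sum_sub_distrib, h1, h2] at hsum
  have hD1 : (DD σ' : ℤ) = ∑ p : Fin n, (((σ' p : ℤ) - (p : ℤ)).natAbs : ℤ) := by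
    rw [DD, Nat.cast_sum]
  have hD2 : (DD σ : ℤ) = ∑ p : Fin n, (((σ p : ℤ) - (p : ℤ)).natAbs : ℤ) := by
    rw [DD, Nat.cast_sum]
  rw [← hD1, ← hD2] at hsum
  linarith

lemma inv_swap (σ : Equiv.Perm (Fin n)) {i j k : Fin n}
    (hik : (i : ℕ) ≤ k) (hkj : (k : ℕ) < j) (hka : (k : ℕ) < (σ i : Fin n))
    (hbk : ((σ j : Fin n) : ℕ) ≤ k)
    (H1 : ∀ p : Fin n, (i : ℕ) < p → (p : ℕ) ≤ k → ((σ p : Fin n) : ℕ) ≤ k)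
    (H2 : ∀ p : Fin n, (k : ℕ) < p → (p : ℕ) < j → (k : ℕ) < ((σ p : Fin n) : ℕ)) :
    invC σ + 1 ≤ invC (σ * Equiv.swap i j)
      + 2 * (min ((σ i : Fin n) : ℕ) (j : ℕ) - max ((σ j : Fin n) : ℕ) (i : ℕ)) := by
  classical
  have hij : i < j := lt_of_le_of_lt hik hkj
  have hijne : i ≠ j := ne_of_lt hij
  have hab : σ j < σ i := lt_of_le_of_lt hbk hka
  have hs1 : (σ * Equiv.swap i j) i = σ j := by
    simp [Equiv.Perm.mul_apply]
  have hs2 : (σ * Equiv.swap i j) j = σ i := by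
    simp [Equiv.Perm.mul_apply]
  have hsp : ∀ p : Fin n, p ≠ i → p ≠ j → (σ * Equiv.swap i j) p = σ p := by
    intro p h1 h2
    simp [Equiv.Perm.mul_apply, Equiv.swap_apply_of_ne_of_ne h1 h2]
  have hss : ∀ w : Fin n, (σ * Equiv.swap i j) (Equiv.swap i j w) = σ w := by
    intro w
    simp [Equiv.Perm.mul_apply, Equiv.swap_apply_self]
  unfold invC
  set σ' := σ * Equiv.swap i j with hσ'
  set I1 := Finset.univ.filter (fun q : Fin n × Fin n => q.1 < q.2 ∧ σ q.2 < σ q.1) with hI1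
  set I2 := Finset.univ.filter (fun q : Fin n × Fin n => q.1 < q.2 ∧ σ' q.2 < σ' q.1) with hI2
  set C1 := I1.filter (fun q => Equiv.swap i j q.2 < Equiv.swap i j q.1) with hC1
  set C2 := I2.filter (fun q => Equiv.swap i j q.2 < Equiv.swap i j q.1) with hC2
  have memI1 : ∀ q : Fin n × Fin n, q ∈ I1 ↔ q.1 < q.2 ∧ σ q.2 < σ q.1 := by
    intro q; rw [hI1, Finset.mem_filter]; simp
  have memI2 : ∀ q : Fin n × Fin n, q ∈ I2 ↔ q.1 < q.2 ∧ σ' q.2 < σ' q.1 := by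
    intro q; rw [hI2, Finset.mem_filter]; simp
  have hbijcard : (I1 \ C1).card = (I2 \ C2).card := by
    apply Finset.card_bij (fun q _ => ((Equiv.swap i j q.1, Equiv.swap i j q.2) : Fin n × Fin n))
    · intro q hq
      rw [Finset.mem_sdiff] at hq
      obtain ⟨hqI, hqC⟩ := hq
      obtain ⟨h12, hinv⟩ := (memI1 q).1 hqI
      have hnrev : ¬ (Equiv.swap i j q.2 < Equiv.swap i j q.1) := by
        intro hrev
        exact hqC (Finset.mem_filter.2 ⟨hqI, hrev⟩)
      have hne : Equiv.swap i j q.1 ≠ Equiv.swap i j q.2 :=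
        fun hh => (ne_of_lt h12) ((Equiv.swap i j).injective hh)
      have hlt : Equiv.swap i j q.1 < Equiv.swap i j q.2 :=
        lt_of_le_of_ne (not_lt.1 hnrev) hne
      rw [Finset.mem_sdiff]
      constructor
      · rw [memI2]
        refine ⟨hlt, ?_⟩
        rw [hss, hss]
        exact hinv
      · intro hmem
        have := (Finset.mem_filter.1 hmem).2
        simp only [Equiv.swap_apply_self] at this
        exact absurd h12 (not_lt.2 this.le)
    · intro q1 hq1 q2 hq2 heq
      have h1 := congrArg Prod.fst heq
      have h2 := congrArg Prod.snd heq
      simp only at h1 h2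
      exact Prod.ext ((Equiv.swap i j).injective h1) ((Equiv.swap i j).injective h2)
    · intro q hq
      rw [Finset.mem_sdiff] at hq
      obtain ⟨hqI, hqC⟩ := hq
      obtain ⟨h12, hinv⟩ := (memI2 q).1 hqI
      have hnrev : ¬ (Equiv.swap i j q.2 < Equiv.swap i j q.1) := by
        intro hrev
        exact hqC (Finset.mem_filter.2 ⟨hqI, hrev⟩)
      have hne : Equiv.swap i j q.1 ≠ Equiv.swap i j q.2 :=
        fun hh => (ne_of_lt h12) ((Equiv.swap i j).injective hh)
      have hlt : Equiv.swap i j q.1 < Equiv.swap i j q.2 :=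
        lt_of_le_of_ne (not_lt.1 hnrev) hne
      refine ⟨(Equiv.swap i j q.1, Equiv.swap i j q.2), ?_, ?_⟩
      · rw [Finset.mem_sdiff]
        constructor
        · rw [memI1]
          refine ⟨hlt, ?_⟩
          have e2 : σ (Equiv.swap i j q.2) = σ' q.2 := by
            have h := hss (Equiv.swap i j q.2)
            rwa [Equiv.swap_apply_self] at h
          have e1 : σ (Equiv.swap i j q.1) = σ' q.1 := by
            have h := hss (Equiv.swap i j q.1)
            rwa [Equiv.swap_apply_self] at h
          rw [e1, e2]
          exact hinv
        · intro hmem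
          have := (Finset.mem_filter.1 hmem).2
          simp only [Equiv.swap_apply_self] at this
          exact absurd h12 (not_lt.2 this.le)
      · simp [Equiv.swap_apply_self]
  have hsplit1 : (I1 \ C1).card + C1.card = I1.card :=
    Finset.card_sdiff_add_card_eq_card (Finset.filter_subset _ _)
  have hsplit2 : (I2 \ C2).card + C2.card = I2.card :=
    Finset.card_sdiff_add_card_eq_card (Finset.filter_subset _ _)
  set P1 := Finset.univ.filter (fun p : Fin n => i < p ∧ p < j ∧ σ p < σ i) with hP1def
  set P2 := Finset.univ.filter (fun p : Fin n => i < p ∧ p < j ∧ σ j < σ p) with hP2def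
  set Q1 := Finset.univ.filter (fun p : Fin n => i < p ∧ p < j ∧ σ p < σ j) with hQ1def
  set Q2 := Finset.univ.filter (fun p : Fin n => i < p ∧ p < j ∧ σ i < σ p) with hQ2def
  set X := Finset.univ.filter
    (fun p : Fin n => i < p ∧ p < j ∧ σ j < σ p ∧ σ p < σ i) with hXdef
  have hCsub : C1 ⊆ insert ((i, j) : Fin n × Fin n)
      ((P1.image fun p => ((i, p) : Fin n × Fin n)) ∪
        (P2.image fun p => ((p, j) : Fin n × Fin n))) := by
    intro q hq
    obtain ⟨hqI, hrev⟩ := Finset.mem_filter.1 hq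
    obtain ⟨h12, hinv⟩ := (memI1 q).1 hqI
    rw [Finset.mem_insert]
    by_cases h1i : q.1 = i
    · by_cases h2j : q.2 = j
      · refine Or.inl ?_
        rw [← h1i, ← h2j]
      · have h2i : q.2 ≠ i := ne_of_gt (h1i ▸ h12)
        rw [h1i] at h12 hinv
        rw [Equiv.swap_apply_of_ne_of_ne h2i h2j, h1i, Equiv.swap_apply_left] at hrev
        refine Or.inr (Finset.mem_union_left _ (Finset.mem_image.2 ⟨q.2, ?_, ?_⟩))
        · rw [hP1def, Finset.mem_filter]
          exact ⟨Finset.mem_univ _, h12, hrev, hinv⟩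
        · rw [← h1i]
    · by_cases h1j : q.1 = j
      · exfalso
        have h2j : q.2 ≠ j := ne_of_gt (h1j ▸ h12)
        have h2i : q.2 ≠ i := ne_of_gt (lt_trans hij (h1j ▸ h12))
        rw [Equiv.swap_apply_of_ne_of_ne h2i h2j, h1j, Equiv.swap_apply_right] at hrev
        exact absurd (lt_trans (lt_trans hij (h1j ▸ h12)) hrev) (lt_irrefl i)
      · by_cases h2i : q.2 = i
        · exfalso
          rw [h2i, Equiv.swap_apply_left, Equiv.swap_apply_of_ne_of_ne h1i h1j] at hrev
          exact absurd (lt_trans (lt_trans (h2i ▸ h12) hij) hrev) (lt_irrefl _)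
        · by_cases h2j : q.2 = j
          · rw [h2j] at h12 hinv
            rw [h2j, Equiv.swap_apply_right, Equiv.swap_apply_of_ne_of_ne h1i h1j] at hrev
            refine Or.inr (Finset.mem_union_right _ (Finset.mem_image.2 ⟨q.1, ?_, ?_⟩))
            · rw [hP2def, Finset.mem_filter]
              exact ⟨Finset.mem_univ _, hrev, h12, hinv⟩
            · rw [← h2j]
          · exfalso
            rw [Equiv.swap_apply_of_ne_of_ne h1i h1j,
              Equiv.swap_apply_of_ne_of_ne h2i h2j] at hrev
            exact absurd h12 (not_lt.2 hrev.le)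
  have hCsup : (Q1.image fun p => ((i, p) : Fin n × Fin n)) ∪
      (Q2.image fun p => ((p, j) : Fin n × Fin n)) ⊆ C2 := by
    intro q hq
    rcases Finset.mem_union.1 hq with hq1 | hq2
    · obtain ⟨p, hp, rfl⟩ := Finset.mem_image.1 hq1
      obtain ⟨-, hp1, hp2, hp3⟩ := Finset.mem_filter.1 hp
      have hpne1 : p ≠ i := ne_of_gt hp1
      have hpne2 : p ≠ j := ne_of_lt hp2
      rw [hC2, Finset.mem_filter]
      constructor
      · rw [memI2]
        refine ⟨hp1, ?_⟩
        rw [hs1, hsp p hpne1 hpne2]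
        exact hp3
      · simp only
        rw [Equiv.swap_apply_left, Equiv.swap_apply_of_ne_of_ne hpne1 hpne2]
        exact hp2
    · obtain ⟨p, hp, rfl⟩ := Finset.mem_image.1 hq2
      obtain ⟨-, hp1, hp2, hp3⟩ := Finset.mem_filter.1 hp
      have hpne1 : p ≠ i := ne_of_gt hp1
      have hpne2 : p ≠ j := ne_of_lt hp2
      rw [hC2, Finset.mem_filter]
      constructor
      · rw [memI2]
        refine ⟨hp2, ?_⟩
        rw [hs2, hsp p hpne1 hpne2]
        exact hp3
      · simp only
        rw [Equiv.swap_apply_right, Equiv.swap_apply_of_ne_of_ne hpne1 hpne2]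
        exact hp1
  have hC1card : C1.card ≤ 1 + (P1.card + P2.card) := by
    calc C1.card ≤ _ := Finset.card_le_card hCsub
    _ ≤ ((P1.image fun p => ((i, p) : Fin n × Fin n)) ∪
        (P2.image fun p => ((p, j) : Fin n × Fin n))).card + 1 := Finset.card_insert_le _ _
    _ ≤ ((P1.image fun p => ((i, p) : Fin n × Fin n)).card +
        (P2.image fun p => ((p, j) : Fin n × Fin n)).card) + 1 := by
        exact Nat.add_le_add_right (Finset.card_union_le _ _) 1
    _ ≤ (P1.card + P2.card) + 1 :=
        Nat.add_le_add_right (Nat.add_le_add (Finset.card_image_le) (Finset.card_image_le)) 1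
    _ = 1 + (P1.card + P2.card) := by omega
  have hC2card : Q1.card + Q2.card ≤ C2.card := by
    have hdisj : Disjoint (Q1.image fun p => ((i, p) : Fin n × Fin n))
        (Q2.image fun p => ((p, j) : Fin n × Fin n)) := by
      rw [Finset.disjoint_left]
      rintro q hq1 hq2
      obtain ⟨p, hp, rfl⟩ := Finset.mem_image.1 hq1
      obtain ⟨p', hp', heq⟩ := Finset.mem_image.1 hq2
      have h1 := congrArg Prod.fst heq
      simp only at h1
      obtain ⟨-, hp'1, -, -⟩ := Finset.mem_filter.1 hp'
      rw [h1] at hp'1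
      exact absurd hp'1 (lt_irrefl _)
    have hinj1 : Function.Injective (fun p : Fin n => ((i, p) : Fin n × Fin n)) :=
      fun a b hab => congrArg Prod.snd hab
    have hinj2 : Function.Injective (fun p : Fin n => ((p, j) : Fin n × Fin n)) :=
      fun a b hab => congrArg Prod.fst hab
    calc Q1.card + Q2.card
        = (Q1.image fun p => ((i, p) : Fin n × Fin n)).card +
          (Q2.image fun p => ((p, j) : Fin n × Fin n)).card := by
          rw [Finset.card_image_of_injective _ hinj1, Finset.card_image_of_injective _ hinj2]
    _ = ((Q1.image fun p => ((i, p) : Fin n × Fin n)) ∪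
          (Q2.image fun p => ((p, j) : Fin n × Fin n))).card :=
          (Finset.card_union_of_disjoint hdisj).symm
    _ ≤ C2.card := Finset.card_le_card hCsup
  have hPQ1 : P1.card = Q1.card + X.card := by
    have hun : Q1 ∪ X = P1 := by
      ext p
      rw [hP1def, hQ1def, hXdef, Finset.mem_union, Finset.mem_filter, Finset.mem_filter,
        Finset.mem_filter]
      constructor
      · rintro (⟨h0, h1, h2, h3⟩ | ⟨h0, h1, h2, h3, h4⟩)
        · exact ⟨h0, h1, h2, lt_trans h3 hab⟩
        · exact ⟨h0, h1, h2, h4⟩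
      · rintro ⟨h0, h1, h2, h3⟩
        have hne : σ p ≠ σ j := fun hh => (ne_of_lt h2) (σ.injective hh)
        rcases lt_or_gt_of_ne hne with hlt | hgt
        · exact Or.inl ⟨h0, h1, h2, hlt⟩
        · exact Or.inr ⟨h0, h1, h2, hgt, h3⟩
    have hdisj : Disjoint Q1 X := by
      rw [Finset.disjoint_left]
      intro p hp1 hp2
      obtain ⟨-, -, -, h3⟩ := Finset.mem_filter.1 hp1
      obtain ⟨-, -, -, h4, -⟩ := Finset.mem_filter.1 hp2
      exact absurd h3 (not_lt.2 h4.le)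
    rw [← hun, Finset.card_union_of_disjoint hdisj]
  have hPQ2 : P2.card = Q2.card + X.card := by
    have hun : Q2 ∪ X = P2 := by
      ext p
      rw [hP2def, hQ2def, hXdef, Finset.mem_union, Finset.mem_filter, Finset.mem_filter,
        Finset.mem_filter]
      constructor
      · rintro (⟨h0, h1, h2, h3⟩ | ⟨h0, h1, h2, h3, h4⟩)
        · exact ⟨h0, h1, h2, lt_trans hab h3⟩
        · exact ⟨h0, h1, h2, h3⟩
      · rintro ⟨h0, h1, h2, h3⟩
        have hne : σ p ≠ σ i := fun hh => (ne_of_gt h1) (σ.injective hh)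
        rcases lt_or_gt_of_ne hne with hlt | hgt
        · exact Or.inr ⟨h0, h1, h2, h3, hlt⟩
        · exact Or.inl ⟨h0, h1, h2, hgt⟩
    have hdisj : Disjoint Q2 X := by
      rw [Finset.disjoint_left]
      intro p hp1 hp2
      obtain ⟨-, -, -, h3⟩ := Finset.mem_filter.1 hp1
      obtain ⟨-, -, -, -, h4⟩ := Finset.mem_filter.1 hp2
      exact absurd h3 (not_lt.2 h4.le)
    rw [← hun, Finset.card_union_of_disjoint hdisj]
  set X1 := Finset.univ.filter
    (fun p : Fin n => i < p ∧ p ≤ k ∧ σ j < σ p ∧ σ p < σ i) with hX1def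
  set X2 := Finset.univ.filter
    (fun p : Fin n => k < p ∧ p < j ∧ σ j < σ p ∧ σ p < σ i) with hX2def
  have hXsplit : X.card ≤ X1.card + X2.card := by
    have hsub : X ⊆ X1 ∪ X2 := by
      intro p hp
      obtain ⟨-, h1, h2, h3, h4⟩ := Finset.mem_filter.1 hp
      rcases le_or_gt p k with hpk | hkp
      · exact Finset.mem_union_left _
          (Finset.mem_filter.2 ⟨Finset.mem_univ _, h1, hpk, h3, h4⟩)
      · exact Finset.mem_union_right _
          (Finset.mem_filter.2 ⟨Finset.mem_univ _, hkp, h2, h3, h4⟩)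
    exact le_trans (Finset.card_le_card hsub) (Finset.card_union_le _ _)
  have hX1a : X1.card ≤ (k : ℕ) - (i : ℕ) := by
    have hsub : X1 ⊆ Finset.Ioc i k := by
      intro p hp
      obtain ⟨-, h1, h2, -, -⟩ := Finset.mem_filter.1 hp
      exact Finset.mem_Ioc.2 ⟨h1, h2⟩
    calc X1.card ≤ (Finset.Ioc i k).card := Finset.card_le_card hsub
    _ = (k : ℕ) - (i : ℕ) := Fin.card_Ioc i k
  have hX1b : X1.card ≤ (k : ℕ) - ((σ j : Fin n) : ℕ) := by
    have hmap : ∀ p ∈ X1, σ p ∈ Finset.Ioc (σ j) k := by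
      intro p hp
      obtain ⟨-, h1, h2, h3, -⟩ := Finset.mem_filter.1 hp
      refine Finset.mem_Ioc.2 ⟨h3, ?_⟩
      have := H1 p h1 h2
      exact this
    calc X1.card ≤ (Finset.Ioc (σ j) k).card :=
      Finset.card_le_card_of_injOn σ hmap (σ.injective.injOn)
    _ = (k : ℕ) - ((σ j : Fin n) : ℕ) := Fin.card_Ioc _ _
  have hX2a : X2.card ≤ (j : ℕ) - (k : ℕ) - 1 := by
    have hsub : X2 ⊆ Finset.Ioo k j := by
      intro p hp
      obtain ⟨-, h1, h2, -, -⟩ := Finset.mem_filter.1 hp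
      exact Finset.mem_Ioo.2 ⟨h1, h2⟩
    calc X2.card ≤ (Finset.Ioo k j).card := Finset.card_le_card hsub
    _ = (j : ℕ) - (k : ℕ) - 1 := Fin.card_Ioo k j
  have hX2b : X2.card ≤ ((σ i : Fin n) : ℕ) - (k : ℕ) - 1 := by
    have hmap : ∀ p ∈ X2, σ p ∈ Finset.Ioo k (σ i) := by
      intro p hp
      obtain ⟨-, h1, h2, -, h4⟩ := Finset.mem_filter.1 hp
      exact Finset.mem_Ioo.2 ⟨H2 p h1 h2, h4⟩
    calc X2.card ≤ (Finset.Ioo k (σ i)).card :=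
      Finset.card_le_card_of_injOn σ hmap (σ.injective.injOn)
    _ = ((σ i : Fin n) : ℕ) - (k : ℕ) - 1 := Fin.card_Ioo _ _
  omega

theorem main (σ : Equiv.Perm (Fin n)) : invC σ + (n - cyc σ) ≤ DD σ := by
  suffices H : ∀ d : ℕ, ∀ σ : Equiv.Perm (Fin n), DD σ = d → invC σ + (n - cyc σ) ≤ DD σ by
    exact H (DD σ) σ rfl
  intro d
  induction d using Nat.strong_induction_on with
  | _ d ih =>
    intro σ hd
    by_cases h1 : σ = 1
    · subst h1
      rw [invC_one, cyc_one]
      omega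
    · obtain ⟨i, j, k, hik, hkj, hka, hbk, H1, H2⟩ := exists_cross h1
      have hijne : i ≠ j := by
        intro hh
        rw [hh] at hik
        omega
      have hDD := DD_swap σ hijne
      have hinv := inv_swap σ hik hkj hka hbk H1 H2
      have hcyc : cyc (σ * Equiv.swap i j) ≤ cyc σ + 1 := cyc_swap_le σ i j
      have hDeq : DD (σ * Equiv.swap i j)
          + 2 * (min ((σ i : Fin n) : ℕ) (j : ℕ) - max ((σ j : Fin n) : ℕ) (i : ℕ))
          = DD σ := by
        omega
      have hlt : DD (σ * Equiv.swap i j) < d := by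
        omega
      have hIH := ih (DD (σ * Equiv.swap i j)) hlt (σ * Equiv.swap i j) rfl
      omega

end DG

theorem diaconis_graham {n : ℕ} (σ : Equiv.Perm (Fin n)) :
    (Finset.univ.filter fun p : Fin n × Fin n => p.1 < p.2 ∧ σ p.2 < σ p.1).card +
      (n - (Multiset.card σ.cycleType + (Finset.univ.filter fun i : Fin n => σ i = i).card)) ≤
      ∑ i : Fin n, ((σ i : ℤ) - (i : ℤ)).natAbs := by
  exact DG.main σ
end

section
/- Let S_m denote the large Schröder numbers, with generating function S(y) = ∑ S_m y^m satisfying S = y + yS + S². Then any formal power series F with F = 1 + ∑_{k≥2} S_{k−1} u x^k F^k satisfies the polynomial identity 1 + (ux−2)F + (1 − ux − ux²)F² + (ux² + u²x³)F³ = 0. -/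
open PowerSeries

noncomputable section BivariateAux

/-- Constants map `ℚ → ℚ⟦X⟧⟦X⟧`. -/
def φQ : ℚ →+* PowerSeries (PowerSeries ℚ) :=
  (PowerSeries.C (R := PowerSeries ℚ)).comp (PowerSeries.C (R := ℚ))

/-- Evaluation of a polynomial at `W`. -/
def subE (W : PowerSeries (PowerSeries ℚ)) (p : Polynomial ℚ) : PowerSeries (PowerSeries ℚ) :=
  Polynomial.eval₂ φQ W p

/-- Substitution of `W` (with `X ^ k ∣ W ^ k`) into a univariate power series. -/
def subst' (W : PowerSeries (PowerSeries ℚ)) (f : PowerSeries ℚ) : PowerSeries (PowerSeries ℚ) :=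
  PowerSeries.mk fun n => coeff (R := PowerSeries ℚ) n (subE W (trunc (n + 1) f))

variable {W : PowerSeries (PowerSeries ℚ)}

lemma subE_vanish (hW : ∀ k, (X : PowerSeries (PowerSeries ℚ)) ^ k ∣ W ^ k) (n : ℕ) (D : Polynomial ℚ) (hD : Polynomial.X ^ (n + 1) ∣ D) :
    coeff (R := PowerSeries ℚ) n (subE W D) = 0 := by
  obtain ⟨q, rfl⟩ := hD
  obtain ⟨g, hg⟩ := hW (n + 1)
  rw [subE, Polynomial.eval₂_mul, Polynomial.eval₂_pow, Polynomial.eval₂_X, hg, mul_assoc,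
    mul_comm, PowerSeries.coeff_mul_X_pow']
  simp

lemma subE_stable (hW : ∀ k, (X : PowerSeries (PowerSeries ℚ)) ^ k ∣ W ^ k) {n m : ℕ} (h : n ≤ m) (f : PowerSeries ℚ) :
    coeff (R := PowerSeries ℚ) n (subE W (trunc (m + 1) f)) =
      coeff (R := PowerSeries ℚ) n (subE W (trunc (n + 1) f)) := by
  have hD : Polynomial.X ^ (n + 1) ∣ (trunc (m + 1) f - trunc (n + 1) f) := by
    rw [Polynomial.X_pow_dvd_iff]
    intro d hd
    rw [Polynomial.coeff_sub, coeff_trunc, coeff_trunc, if_pos (by omega), if_pos hd, sub_self]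
  have h0 := subE_vanish hW n _ hD
  rw [subE, Polynomial.eval₂_sub, map_sub, ← subE, ← subE, sub_eq_zero] at h0
  exact h0

lemma coeff_subst' (f : PowerSeries ℚ) (n : ℕ) :
    coeff (R := PowerSeries ℚ) n (subst' W f) = coeff (R := PowerSeries ℚ) n (subE W (trunc (n + 1) f)) :=
  coeff_mk _ _

lemma subst'_add (hW : ∀ k, (X : PowerSeries (PowerSeries ℚ)) ^ k ∣ W ^ k) (f g : PowerSeries ℚ) : subst' W (f + g) = subst' W f + subst' W g := by
  refine PowerSeries.ext fun n => ?_
  simp only [coeff_subst', map_add, subE, Polynomial.eval₂_add]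

lemma subst'_mul (hW : ∀ k, (X : PowerSeries (PowerSeries ℚ)) ^ k ∣ W ^ k) (f g : PowerSeries ℚ) : subst' W (f * g) = subst' W f * subst' W g := by
  refine PowerSeries.ext fun n => ?_
  have hD : Polynomial.X ^ (n + 1) ∣
      (trunc (n + 1) f * trunc (n + 1) g - trunc (n + 1) (f * g)) := by
    rw [Polynomial.X_pow_dvd_iff]
    intro d hd
    rw [Polynomial.coeff_sub, Polynomial.coeff_mul, coeff_trunc, if_pos hd,
      PowerSeries.coeff_mul, sub_eq_zero]
    refine Finset.sum_congr rfl fun p hp => ?_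
    have h1 := Finset.HasAntidiagonal.antidiagonal.fst_le hp
    have h2 := Finset.HasAntidiagonal.antidiagonal.snd_le hp
    rw [coeff_trunc, coeff_trunc, if_pos (by omega), if_pos (by omega)]
  have h0 := subE_vanish hW n _ hD
  rw [subE, Polynomial.eval₂_sub, map_sub, ← subE, ← subE, sub_eq_zero] at h0
  rw [coeff_subst', ← h0, subE, Polynomial.eval₂_mul, ← subE, ← subE, PowerSeries.coeff_mul,
    PowerSeries.coeff_mul]
  refine Finset.sum_congr rfl fun p hp => ?_
  have h1 := Finset.HasAntidiagonal.antidiagonal.fst_le hp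
  have h2 := Finset.HasAntidiagonal.antidiagonal.snd_le hp
  rw [coeff_subst', coeff_subst', subE_stable hW h1, subE_stable hW h2]

lemma subst'_X (hW : ∀ k, (X : PowerSeries (PowerSeries ℚ)) ^ k ∣ W ^ k) (hW0 : coeff (R := PowerSeries ℚ) 0 W = 0) : subst' W X = W := by
  refine PowerSeries.ext fun n => ?_
  rw [coeff_subst']
  cases n with
  | zero =>
    have h1 : trunc 1 (X : PowerSeries ℚ) = 0 := by
      apply Polynomial.ext
      intro d
      rw [coeff_trunc]
      split_ifs with h
      · interval_cases d
        simp
      · simp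
    rw [h1, subE, Polynomial.eval₂_zero, map_zero, hW0]
  | succ n =>
    rw [trunc_X, subE, Polynomial.eval₂_X]

lemma subE_trunc_expand (g : PowerSeries ℚ) (n : ℕ) :
    subE W (trunc (n + 1) g) =
      ∑ k ∈ Finset.range (n + 1), φQ (coeff (R := ℚ) k g) * W ^ k := by
  rw [subE, trunc_apply, ← Finset.range_eq_Ico, Polynomial.eval₂_finset_sum]
  exact Finset.sum_congr rfl fun k _ => Polynomial.eval₂_monomial _ _

end BivariateAux

theorem bivariate_unlinked_gf (S : ℕ → ℚ) (hS0 : S 0 = 0)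
    (hS : PowerSeries.mk S = X + X * PowerSeries.mk S + (PowerSeries.mk S) ^ 2)
    (F : PowerSeries (PowerSeries ℚ))
    (hF1 : constantCoeff (R := PowerSeries ℚ) F = 1)
    (hF : ∀ n : ℕ, coeff (R := PowerSeries ℚ) n F =
      coeff (R := PowerSeries ℚ) n
        (1 + ∑ k ∈ Finset.Icc 2 n,
          C (R := PowerSeries ℚ) (PowerSeries.C (R := ℚ) (S (k - 1)) * X) * X ^ k * F ^ k)) :
    letI U : PowerSeries (PowerSeries ℚ) := C (R := PowerSeries ℚ) X
    1 + (U * X - 2) * F + (1 - U * X - U * X ^ 2) * F ^ 2 +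
      (U * X ^ 2 + U ^ 2 * X ^ 3) * F ^ 3 = 0 := by
  show 1 + (C (R := PowerSeries ℚ) X * X - 2) * F +
      (1 - C (R := PowerSeries ℚ) X * X - C (R := PowerSeries ℚ) X * X ^ 2) * F ^ 2 +
      (C (R := PowerSeries ℚ) X * X ^ 2 + (C (R := PowerSeries ℚ) X) ^ 2 * X ^ 3) * F ^ 3 = 0
  have hW : ∀ k, (X : PowerSeries (PowerSeries ℚ)) ^ k ∣ (X * F) ^ k :=
    fun k => ⟨F ^ k, by rw [mul_pow]⟩
  have hW0 : coeff (R := PowerSeries ℚ) 0 (X * F) = 0 := by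
    simp [coeff_zero_eq_constantCoeff]
  set G := subst' (X * F) (PowerSeries.mk S) with hG
  have e2 : G = X * F + X * F * G + G ^ 2 := by
    have h := congrArg (subst' (X * F)) hS
    rw [subst'_add hW, subst'_add hW, sq, subst'_mul hW, subst'_mul hW, subst'_X hW hW0,
      ← hG, ← sq] at h
    exact h
  have hXG : X * F * G = subst' (X * F) (X * PowerSeries.mk S) := by
    rw [subst'_mul hW, subst'_X hW hW0, hG]
  have e1 : F = 1 + C (R := PowerSeries ℚ) X * (X * F * G) := by
    rw [hXG]
    refine PowerSeries.ext fun n => ?_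
    rw [hF n, map_add, map_add]
    congr 1
    rw [map_sum, PowerSeries.coeff_C_mul, coeff_subst', subE_trunc_expand, map_sum,
      Finset.mul_sum]
    have hsub : Finset.Icc 2 n ⊆ Finset.range (n + 1) := by
      intro k hk
      simp only [Finset.mem_Icc] at hk
      simp only [Finset.mem_range]
      omega
    rw [← Finset.sum_subset hsub]
    · refine Finset.sum_congr rfl fun k hk => ?_
      simp only [Finset.mem_Icc] at hk
      obtain ⟨j, rfl⟩ : ∃ j, k = j + 2 := ⟨k - 2, by omega⟩
      have hcX : coeff (R := ℚ) (j + 2) (X * PowerSeries.mk S) = S (j + 1) := by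
        rw [PowerSeries.coeff_succ_X_mul, coeff_mk]
      rw [hcX, ← PowerSeries.coeff_C_mul]
      congr 1
      simp only [show j + 2 - 1 = j + 1 from rfl, φQ, RingHom.comp_apply, map_mul, mul_pow]
      ring
    · intro k hkr hki
      simp only [Finset.mem_range] at hkr
      simp only [Finset.mem_Icc, not_and_or, not_le] at hki
      have hk01 : k = 0 ∨ k = 1 := by omega
      have hzero : coeff (R := ℚ) k (X * PowerSeries.mk S) = 0 := by
        rcases hk01 with rfl | rfl
        · rw [mul_comm, PowerSeries.coeff_zero_mul_X]
        · rw [PowerSeries.coeff_succ_X_mul, coeff_zero_eq_constantCoeff]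
          simpa using hS0
      rw [hzero, map_zero, zero_mul, map_zero, mul_zero]
  linear_combination
    ((F - 1 + C (R := PowerSeries ℚ) X * X * F * G) - C (R := PowerSeries ℚ) X * X * F +
      C (R := PowerSeries ℚ) X * X ^ 2 * F ^ 2) * e1 +
    (-(C (R := PowerSeries ℚ) X * X * F) ^ 2) * e2
end
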